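/- arXiv:1907.03510 — 5 statements merged into one kernel-verified Lean document; each statement's English description precedes it below -/
import Mathlib

section
/- Let f : X → Y be a map between metric spaces such that (1) f maps bounded sets to bounded sets, and (2) for all subsets A, B ⊆ X, if A and B are not coarsely disjoint then f(A) and f(B) are not coarsely disjoint. Then f is a coarse map (i.e., coarsely uniform and coarsely proper). -/
open Set Bornology Metric

/-- `E ⊆ X × X` is an entourage if `sup_{(x,y) ∈ E} d(x,y) < ∞`. -/
def IsEnt {X : Type*} [PseudoMetricSpace X] (E : Set (X × X)) : Prop :=
  ∃ C : ℝ, ∀ p ∈ E, dist p.1 p.2 ≤ C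

/-- `E[A] = {y : ∃ a ∈ A, (a,y) ∈ E}`. -/
def entImg {X : Type*} [PseudoMetricSpace X] (E : Set (X × X)) (A : Set X) : Set X :=
  {y | ∃ a ∈ A, (a, y) ∈ E}

/-- `A` and `B` are not coarsely disjoint: some entourage `E` has `E[A] ∩ E[B]` unbounded. -/
def NotCD {X : Type*} [PseudoMetricSpace X] (A B : Set X) : Prop :=
  ∃ E : Set (X × X), IsEnt E ∧ ¬ IsBounded (entImg E A ∩ entImg E B)

/-- `A` and `B` are coarsely disjoint: every entourage `E` has `E[A] ∩ E[B]` bounded. -/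
def CD {X : Type*} [PseudoMetricSpace X] (A B : Set X) : Prop :=
  ∀ E : Set (X × X), IsEnt E → IsBounded (entImg E A ∩ entImg E B)

/-- Coarsely uniform: `f × f` maps entourages to entourages. -/
def CUnif {X Y : Type*} [PseudoMetricSpace X] [PseudoMetricSpace Y] (f : X → Y) : Prop :=
  ∀ E : Set (X × X), IsEnt E → IsEnt ((fun p : X × X => (f p.1, f p.2)) '' E)

/-- Coarsely proper: preimages of bounded sets are bounded. -/
def CProper {X Y : Type*} [PseudoMetricSpace X] [PseudoMetricSpace Y] (f : X → Y) : Prop :=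
  ∀ B : Set Y, IsBounded B → IsBounded (f ⁻¹' B)

/-- A coarse map is coarsely uniform and coarsely proper. -/
def Coarse {X Y : Type*} [PseudoMetricSpace X] [PseudoMetricSpace Y] (f : X → Y) : Prop :=
  CUnif f ∧ CProper f

/-- Coarsely injective: `(f × f)⁻¹` of any entourage is an entourage. -/
def CInj {X Y : Type*} [PseudoMetricSpace X] [PseudoMetricSpace Y] (f : X → Y) : Prop :=
  ∀ F : Set (Y × Y), IsEnt F → IsEnt ((fun p : X × X => (f p.1, f p.2)) ⁻¹' F)

/-- A coarse ultrafilter on a metric space. -/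
structure CUF (X : Type*) [PseudoMetricSpace X] where
  sets : Set (Set X)
  pairClose : ∀ A ∈ sets, ∀ B ∈ sets, NotCD A B
  split : ∀ A B : Set X, A ∪ B ∈ sets → A ∈ sets ∨ B ∈ sets
  univ_mem : Set.univ ∈ sets

/-- Pushforward system of sets of a coarse ultrafilter along a map. -/
def push {X Y : Type*} [PseudoMetricSpace X] [PseudoMetricSpace Y] (f : X → Y) (F : CUF X) :
    Set (Set Y) :=
  {A : Set Y | f ⁻¹' A ∈ F.sets}

/-- Asymptotically alike coarse ultrafilters. -/
def AAlike {X : Type*} [PseudoMetricSpace X] (F G : CUF X) : Prop :=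
  ∀ A ∈ F.sets, ∀ B ∈ G.sets, NotCD A B

/-- Asymptotically alike, on raw systems of subsets. -/
def AAlikeS {X : Type*} [PseudoMetricSpace X] (S T : Set (Set X)) : Prop :=
  ∀ A ∈ S, ∀ B ∈ T, NotCD A B

/-! Properness: if `f⁻¹ B` were unbounded it would not be coarsely disjoint from itself, while
its image lies in the bounded set `B`.

Uniformity: if `f × f` blew up an entourage `E`, pick `(xₘ, yₘ) ∈ E` with `d(f xₘ, f yₘ) ≥ m`.
Along a suitable infinite set of indices the points `f xₘ` and `f yₘ` are coarsely disjoint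
(either one of the two sequences has a bounded subsequence, or both escape to infinity and can be
thinned out until they separate), whereas `xₘ` and `yₘ`, being uniformly close and unbounded,
are not. -/

open Filter

section CoarseDisjointness

variable {X : Type*} [PseudoMetricSpace X]

lemma isBounded_entImg {E : Set (X × X)} (hE : IsEnt E) {A : Set X} (hA : IsBounded A) :
    IsBounded (entImg E A) := by
  obtain ⟨C, hC⟩ := hE
  refine (hA.cthickening (δ := C)).subset ?_
  rintro y ⟨a, ha, haE⟩
  exact mem_cthickening_of_dist_le y a C A ha (by rw [dist_comm]; exact hC _ haE)

lemma cd_of_isBounded_left {A : Set X} (hA : IsBounded A) (B : Set X) : CD A B :=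
  fun _ hE => (isBounded_entImg hE hA).subset inter_subset_left

lemma cd_of_isBounded_right (A : Set X) {B : Set X} (hB : IsBounded B) : CD A B :=
  fun _ hE => (isBounded_entImg hE hB).subset inter_subset_right

lemma CD.not_notCD {A B : Set X} (h : CD A B) : ¬ NotCD A B :=
  fun ⟨E, hE, hunb⟩ => hunb (h E hE)

lemma notCD_self {A : Set X} (hA : ¬ IsBounded A) : NotCD A A := by
  refine ⟨{p | p.1 = p.2}, ⟨0, fun p hp => by rw [hp, dist_self]⟩, ?_⟩
  have hdiag : entImg {p : X × X | p.1 = p.2} A = A := by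
    ext y
    simp [entImg]
  rwa [hdiag, inter_self]

lemma notCD_image_of_dist_le {ι : Type*} {x y : ι → X} {T : Set ι} {C : ℝ}
    (hxy : ∀ m ∈ T, dist (x m) (y m) ≤ C) (hx : ¬ IsBounded (x '' T)) :
    NotCD (x '' T) (y '' T) := by
  refine ⟨{p | dist p.1 p.2 ≤ C}, ⟨C, fun _ hp => hp⟩, fun hb => hx (hb.subset ?_)⟩
  rintro _ ⟨m, hm, rfl⟩
  exact ⟨⟨x m, mem_image_of_mem x hm, by simpa using dist_nonneg.trans (hxy m hm)⟩,
    ⟨y m, mem_image_of_mem y hm, (dist_comm _ _).trans_le (hxy m hm)⟩⟩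

/-- Separation in this sense forces `E[u T] ∩ E[v T]` into finitely many balls around
`u k, v k` with `k` at most twice the size of `E`. -/
lemma cd_image_of_separated {u v : ℕ → X} {T : Set ℕ}
    (hsep : ∀ m ∈ T, ∀ m' ∈ T, (min m m' : ℝ) ≤ dist (u m) (v m')) :
    CD (u '' T) (v '' T) := by
  rintro E ⟨D, hD⟩
  have hcover : IsBounded (⋃ k ∈ Iic ⌈2 * D⌉₊, closedBall (u k) D ∪ closedBall (v k) D) :=
    (isBounded_biUnion (finite_Iic _)).mpr fun _ _ =>
      isBounded_closedBall.union isBounded_closedBall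
  refine hcover.subset ?_
  rintro z ⟨⟨_, ⟨m, hm, rfl⟩, hmz⟩, ⟨_, ⟨m', hm', rfl⟩, hm'z⟩⟩
  have hum : dist (u m) z ≤ D := hD _ hmz
  have hvm' : dist (v m') z ≤ D := hD _ hm'z
  have hmin : (min m m' : ℝ) ≤ 2 * D :=
    calc (min m m' : ℝ) ≤ dist (u m) (v m') := hsep m hm m' hm'
      _ ≤ dist (u m) z + dist (v m') z := dist_triangle_right _ _ _
      _ ≤ 2 * D := by linarith
  have hminN : min m m' ≤ ⌈2 * D⌉₊ := by exact_mod_cast hmin.trans (Nat.le_ceil _)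
  rcases le_total m m' with h | h
  · rw [min_eq_left h] at hminN
    exact mem_biUnion (mem_Iic.mpr hminN) (Or.inl (mem_closedBall'.mpr hum))
  · rw [min_eq_right h] at hminN
    exact mem_biUnion (mem_Iic.mpr hminN) (Or.inr (mem_closedBall'.mpr hvm'))

lemma exists_infinite_separated {u v : ℕ → X} (hu : Tendsto u atTop (cobounded X))
    (hv : Tendsto v atTop (cobounded X)) (huv : ∀ m : ℕ, (m : ℝ) ≤ dist (u m) (v m)) :
    ∃ T : Set ℕ, T.Infinite ∧ ∀ m ∈ T, ∀ m' ∈ T, (min m m' : ℝ) ≤ dist (u m) (v m') := by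
  let r : ℕ → ℕ → Prop := fun m k =>
    m < k ∧ (m : ℝ) ≤ dist (u m) (v k) ∧ (m : ℝ) ≤ dist (u k) (v m)
  have hr : ∀ m, ∀ᶠ k in atTop, r m k := fun m =>
    (eventually_gt_atTop m).and <|
      (((tendsto_dist_left_cobounded_atTop (u m)).comp hv).eventually_ge_atTop _).and
        (((tendsto_dist_right_cobounded_atTop (v m)).comp hu).eventually_ge_atTop _)
  obtain ⟨φ, -, hφ⟩ := exists_seq_of_forall_finset_exists (fun _ => True) r
    fun s _ => (s.eventually_all.mpr fun m _ => hr m).exists.imp fun _ h => ⟨trivial, h⟩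
  have hmono : StrictMono φ := fun i j hij => (hφ i j hij).1
  refine ⟨range φ, infinite_range_of_injective hmono.injective, ?_⟩
  rintro _ ⟨i, rfl⟩ _ ⟨j, rfl⟩
  rcases lt_trichotomy i j with h | rfl | h
  · exact (min_le_left _ _).trans (hφ i j h).2.1
  · simpa using huv (φ i)
  · exact (min_le_right _ _).trans (hφ j i h).2.2

lemma exists_infinite_cd_image {u v : ℕ → X} (huv : ∀ m : ℕ, (m : ℝ) ≤ dist (u m) (v m)) :
    ∃ T : Set ℕ, T.Infinite ∧ CD (u '' T) (v '' T) := by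
  by_cases hu : Tendsto u atTop (cobounded X)
  · by_cases hv : Tendsto v atTop (cobounded X)
    · obtain ⟨T, hT, hsep⟩ := exists_infinite_separated hu hv huv
      exact ⟨T, hT, cd_image_of_separated hsep⟩
    obtain ⟨s, hs, hfreq⟩ := not_tendsto_iff_exists_frequently_notMem.mp hv
    refine ⟨_, Nat.frequently_atTop_iff_infinite.mp hfreq, cd_of_isBounded_right _ ?_⟩
    exact (isBounded_compl_iff.mpr hs).subset (image_subset_iff.mpr fun _ hm => hm)
  obtain ⟨s, hs, hfreq⟩ := not_tendsto_iff_exists_frequently_notMem.mp hu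
  refine ⟨_, Nat.frequently_atTop_iff_infinite.mp hfreq, cd_of_isBounded_left ?_ _⟩
  exact (isBounded_compl_iff.mpr hs).subset (image_subset_iff.mpr fun _ hm => hm)

end CoarseDisjointness

section CoarseMaps

variable {X Y : Type*} [PseudoMetricSpace X] [PseudoMetricSpace Y] {f : X → Y}

lemma cProper_of_notCD_image (hf : ∀ A B : Set X, NotCD A B → NotCD (f '' A) (f '' B)) :
    CProper f := by
  intro B hB
  by_contra hunb
  exact (cd_of_isBounded_left (hB.subset (image_preimage_subset f B)) _).not_notCD
    (hf _ _ (notCD_self hunb))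

lemma not_isBounded_image_of_dist_le {x y : ℕ → X} {T : Set ℕ} (hT : T.Infinite) {C : ℝ}
    (hbdd : ∀ B : Set X, IsBounded B → IsBounded (f '' B))
    (hxy : ∀ m ∈ T, dist (x m) (y m) ≤ C) (hf : ∀ m : ℕ, (m : ℝ) ≤ dist (f (x m)) (f (y m))) :
    ¬ IsBounded (x '' T) := by
  intro hx
  have hy : IsBounded (y '' T) := (isBounded_entImg ⟨C, fun _ hp => hp⟩ hx).subset <| by
    rintro _ ⟨m, hm, rfl⟩
    exact ⟨x m, mem_image_of_mem x hm, show dist (x m) (y m) ≤ C from hxy m hm⟩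
  obtain ⟨K, hK⟩ := isBounded_iff.mp (hbdd _ (hx.union hy))
  obtain ⟨m, hm, hKm⟩ := hT.exists_gt ⌈K⌉₊
  have hmK : (m : ℝ) ≤ K :=
    (hf m).trans (hK (mem_image_of_mem f (Or.inl (mem_image_of_mem x hm)))
      (mem_image_of_mem f (Or.inr (mem_image_of_mem y hm))))
  have : K < m := (Nat.le_ceil K).trans_lt (by exact_mod_cast hKm)
  linarith

lemma cUnif_of_notCD_image (hbdd : ∀ B : Set X, IsBounded B → IsBounded (f '' B))
    (hf : ∀ A B : Set X, NotCD A B → NotCD (f '' A) (f '' B)) : CUnif f := by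
  rintro E ⟨C, hC⟩
  by_contra hunif
  have hfar : ∀ m : ℕ, ∃ p ∈ E, (m : ℝ) ≤ dist (f p.1) (f p.2) := fun m => by
    by_contra! h
    refine hunif ⟨m, ?_⟩
    rintro _ ⟨p, hp, rfl⟩
    exact (h p hp).le
  choose p hpE hpf using hfar
  obtain ⟨T, hT, hcd⟩ := exists_infinite_cd_image (u := fun m => f (p m).1) hpf
  have hxy : ∀ m ∈ T, dist (p m).1 (p m).2 ≤ C := fun m _ => hC _ (hpE m)
  have hnotCD :=
    hf _ _ (notCD_image_of_dist_le hxy (not_isBounded_image_of_dist_le hT hbdd hxy hpf))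
  rw [image_image, image_image] at hnotCD
  exact hcd.not_notCD hnotCD

end CoarseMaps

/-- a map sending bounded sets to bounded sets and preserving the
"not coarsely disjoint" relation is a coarse map. -/
theorem stmt0 {X Y : Type*} [MetricSpace X] [MetricSpace Y] (f : X → Y)
    (h1 : ∀ B : Set X, IsBounded B → IsBounded (f '' B))
    (h2 : ∀ A B : Set X, NotCD A B → NotCD (f '' A) (f '' B)) :
    Coarse f :=
  ⟨cUnif_of_notCD_image h1 h2, cProper_of_notCD_image h2⟩
end

section
/- Let f : X → Y be a coarse map between metric spaces. If for all subsets A, B ⊆ X, A being coarsely disjoint from B implies f(A) is coarsely disjoint from f(B), then f is coarsely injective. -/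
open Set Bornology Metric

/-!
If `f` is not coarsely injective, there are pairs with `C`-close images and arbitrarily distant
coordinates. Properness and uniformity of `f` let such pairs be chosen outside any bounded set, so
one can pick pairs `(aₖ, bₖ)` with `d(aᵢ, bⱼ) > max i j`. Then `{aₖ}` and `{bₖ}` are coarsely
disjoint, while `f(bₖ)` lies within `C` of `f(aₖ)` and `{f(bₖ)}` is unbounded, so their images are
not.
-/

section

variable {X : Type*} [PseudoMetricSpace X]

lemma exists_seq_pairs_far {P : X × X → Prop}
    (h : ∀ (S : Finset X) (r : ℝ), ∃ p : X × X, P p ∧ r < dist p.1 p.2 ∧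
      ∀ x ∈ S, r < dist p.1 x ∧ r < dist p.2 x) :
    ∃ a b : ℕ → X, (∀ k, P (a k, b k)) ∧ ∀ i j, ((max i j : ℕ) : ℝ) < dist (a i) (b j) := by
  classical
  choose next hP hsep hfar using h
  let S : ℕ → Finset X := fun n =>
    Nat.rec ∅ (fun k S => insert (next S k).1 (insert (next S k).2 S)) n
  let a : ℕ → X := fun k => (next (S k) k).1
  let b : ℕ → X := fun k => (next (S k) k).2
  have hS_succ : ∀ k, S (k + 1) = insert (a k) (insert (b k) (S k)) := fun k => rfl
  have hS_mono : Monotone S := monotone_nat_of_le_succ fun k => by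
    rw [hS_succ]
    exact (Finset.subset_insert _ _).trans (Finset.subset_insert _ _)
  have hmem : ∀ i j, i < j → a i ∈ S j ∧ b i ∈ S j := by
    intro i j hij
    have hsub := hS_mono (Nat.succ_le_of_lt hij)
    rw [hS_succ] at hsub
    exact ⟨hsub (Finset.mem_insert_self _ _),
      hsub (Finset.mem_insert_of_mem (Finset.mem_insert_self _ _))⟩
  refine ⟨a, b, fun k => hP _ _, fun i j => ?_⟩
  rcases lt_trichotomy i j with hij | rfl | hij
  · rw [max_eq_right hij.le, dist_comm]
    exact (hfar (S j) j (a i) (hmem i j hij).1).2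
  · rw [max_self]
    exact hsep _ _
  · rw [max_eq_left hij.le]
    exact (hfar (S i) i (b j) (hmem j i hij).2).1

lemma cd_range_of_lt_dist {a b : ℕ → X} (h : ∀ i j, ((max i j : ℕ) : ℝ) < dist (a i) (b j)) :
    CD (range a) (range b) := by
  rintro E ⟨R, hR⟩
  set N := ⌈2 * R⌉₊
  refine ((finite_Iic N).image a).isBounded.cthickening (δ := R) |>.subset ?_
  rintro z ⟨⟨_, ⟨i, rfl⟩, hiz⟩, ⟨_, ⟨j, rfl⟩, hjz⟩⟩
  have hiz' : dist (a i) z ≤ R := hR _ hiz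
  have hjz' : dist (b j) z ≤ R := hR _ hjz
  have hi : (i : ℝ) ≤ ((max i j : ℕ) : ℝ) := Nat.cast_le.mpr (le_max_left i j)
  have hiN : i ≤ N := by
    have := dist_triangle_right (a i) (b j) z
    have := Nat.le_ceil (2 * R)
    exact_mod_cast (show (i : ℝ) ≤ N by linarith [h i j])
  exact mem_cthickening_of_dist_le z (a i) R _ ⟨i, hiN, rfl⟩ (by rwa [dist_comm])

lemma not_isBounded_range_of_lt_dist {b : ℕ → X} (x : X) (h : ∀ j : ℕ, (j : ℝ) < dist x (b j)) :
    ¬IsBounded (range b) := by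
  intro hb
  obtain ⟨r, hr⟩ := hb.subset_closedBall x
  have hbr : dist (b ⌈r⌉₊) x ≤ r := hr ⟨_, rfl⟩
  linarith [h ⌈r⌉₊, Nat.le_ceil r, dist_comm x (b ⌈r⌉₊)]

lemma not_cd_range_of_dist_le {a b : ℕ → X} {C : ℝ} (hab : ∀ k, dist (a k) (b k) ≤ C)
    (hb : ¬IsBounded (range b)) : ¬CD (range a) (range b) := by
  intro hcd
  have hC : 0 ≤ C := dist_nonneg.trans (hab 0)
  refine hb ((hcd {q | dist q.1 q.2 ≤ C} ⟨C, fun q hq => hq⟩).subset ?_)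
  rintro _ ⟨k, rfl⟩
  refine ⟨⟨a k, ⟨k, rfl⟩, hab k⟩, ⟨b k, ⟨k, rfl⟩, ?_⟩⟩
  show dist (b k) (b k) ≤ C
  rwa [dist_self]

end

section

variable {X Y : Type*} [PseudoMetricSpace X] [PseudoMetricSpace Y] {f : X → Y}

lemma CUnif.isBounded_image (hf : CUnif f) {K : Set X} (hK : IsBounded K) :
    IsBounded (f '' K) := by
  have hKK : IsEnt (K ×ˢ K) := ⟨diam K, fun p hp => dist_le_diam_of_mem hK hp.1 hp.2⟩
  obtain ⟨C, hC⟩ := hf _ hKK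
  rw [Metric.isBounded_iff]
  refine ⟨C, ?_⟩
  rintro _ ⟨u, hu, rfl⟩ _ ⟨v, hv, rfl⟩
  exact hC (f u, f v) ⟨(u, v), ⟨hu, hv⟩, rfl⟩

lemma CProper.not_isBounded_image (hf : CProper f) {A : Set X} (hA : ¬IsBounded A) :
    ¬IsBounded (f '' A) :=
  fun h => hA ((hf _ h).subset (subset_preimage_image f A))

lemma Coarse.exists_pair_far_from (hf : Coarse f) {C : ℝ}
    (H : ∀ D : ℝ, ∃ p : X × X, dist (f p.1) (f p.2) ≤ C ∧ D < dist p.1 p.2)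
    {K : Set X} (hK : IsBounded K) (r : ℝ) :
    ∃ p : X × X, dist (f p.1) (f p.2) ≤ C ∧ r < dist p.1 p.2 ∧
      ∀ x ∈ K, r < dist p.1 x ∧ r < dist p.2 x := by
  set K' := cthickening r K
  set L := f ⁻¹' cthickening C (f '' K')
  have hL : IsBounded L := hf.2 _ ((hf.1.isBounded_image hK.cthickening).cthickening)
  have close_of_mem : ∀ u v, dist (f u) (f v) ≤ C → u ∈ K' → dist u v ≤ diam L := by
    intro u v huv hu
    have hfu : f u ∈ f '' K' := mem_image_of_mem f hu
    refine dist_le_diam_of_mem hL (self_subset_cthickening _ hfu) ?_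
    exact mem_cthickening_of_dist_le _ _ _ _ hfu (by rwa [dist_comm])
  have far_of_close : ∀ u v, dist (f u) (f v) ≤ C → diam L < dist u v →
      ∀ x ∈ K, r < dist u x := by
    intro u v huv hdist x hx
    by_contra! hux
    exact (close_of_mem u v huv (mem_cthickening_of_dist_le _ _ _ _ hx hux)).not_gt hdist
  obtain ⟨p, hpC, hpD⟩ := H (max r (diam L))
  have hpL : diam L < dist p.1 p.2 := (le_max_right _ _).trans_lt hpD
  refine ⟨p, hpC, (le_max_left _ _).trans_lt hpD, fun x hx => ⟨?_, ?_⟩⟩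
  · exact far_of_close p.1 p.2 hpC hpL x hx
  · exact far_of_close p.2 p.1 (by rwa [dist_comm]) (by rwa [dist_comm]) x hx

end

/-- a coarse map preserving coarse disjointness is coarsely injective. -/
theorem stmt1 {X Y : Type*} [MetricSpace X] [MetricSpace Y] (f : X → Y)
    (hf : Coarse f)
    (h : ∀ A B : Set X, CD A B → CD (f '' A) (f '' B)) :
    CInj f := by
  rintro F ⟨C, hC⟩
  by_contra hne
  have H : ∀ D : ℝ, ∃ p : X × X, dist (f p.1) (f p.2) ≤ C ∧ D < dist p.1 p.2 := by
    intro D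
    by_contra! hD
    exact hne ⟨D, fun p hp => hD p (hC _ hp)⟩
  obtain ⟨a, b, hab, hsep⟩ := exists_seq_pairs_far (P := fun p => dist (f p.1) (f p.2) ≤ C)
    fun S r => hf.exists_pair_far_from H S.finite_toSet.isBounded r
  have hB : ¬IsBounded (f '' range b) :=
    hf.2.not_isBounded_image (not_isBounded_range_of_lt_dist (a 0) fun j => by simpa using hsep 0 j)
  have hcd := h _ _ (cd_range_of_lt_dist hsep)
  rw [← range_comp] at hB
  rw [← range_comp, ← range_comp] at hcd
  exact not_cd_range_of_dist_le hab hB hcd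
end

section
/- If f : X → Y is a coarse map between metric spaces and 𝔉 is a coarse ultrafilter on X, then f_*𝔉 := {A ⊆ Y : f⁻¹(A) ∈ 𝔉} is a coarse ultrafilter on Y. -/
open Set Bornology Metric

section Pushforward

variable {X Y : Type*} [PseudoMetricSpace X] [PseudoMetricSpace Y] {f : X → Y}

lemma entImg_preimage_subset (f : X → Y) (E : Set (X × X)) (A : Set Y) :
    entImg E (f ⁻¹' A) ⊆ f ⁻¹' entImg ((fun p : X × X => (f p.1, f p.2)) '' E) A := by
  rintro x ⟨a, ha, hax⟩
  exact ⟨f a, ha, (a, x), hax, rfl⟩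

lemma NotCD.of_preimage (hf : Coarse f) {A B : Set Y} (h : NotCD (f ⁻¹' A) (f ⁻¹' B)) :
    NotCD A B := by
  obtain ⟨E, hE, hunbdd⟩ := h
  refine ⟨_, hf.1 E hE, fun hbdd => hunbdd ((hf.2 _ hbdd).subset ?_)⟩
  rw [preimage_inter]
  exact inter_subset_inter (entImg_preimage_subset f E A) (entImg_preimage_subset f E B)

def CUF.map (hf : Coarse f) (F : CUF X) : CUF Y where
  sets := push f F
  pairClose _ hA _ hB := (F.pairClose _ hA _ hB).of_preimage hf
  split _ _ hAB := F.split _ _ hAB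
  univ_mem := F.univ_mem

end Pushforward

/-- the pushforward of a coarse ultrafilter along a coarse map is a
coarse ultrafilter. -/
theorem stmt3 {X Y : Type*} [MetricSpace X] [MetricSpace Y] (f : X → Y)
    (hf : Coarse f) (F : CUF X) :
    ∃ G : CUF Y, G.sets = push f F :=
  ⟨F.map hf, rfl⟩
end

section
/- Let X, Y be metric spaces, Y coarsely geodesic and coarsely proper, and let X∗Y = {(x,y) : |d(p,x) − d(q,y)| ≤ R} be the asymptotic product. If (U_i)_{i=1..n} is a coarse cover of X and (V_j)_{j=1..m} is a coarse cover of Y, then ((U_i × V_j) ∩ (X∗Y))_{i,j} is a coarse cover of X∗Y. -/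
/-!
If a point `z` of `X ∗ Y` lies in the `C`-thickening of the complement of every `U i ×ˢ V j`,
then either `z.1` lies in the `C`-thickening of every `(U i)ᶜ`, or for some `i` no point
`C`-close to `z.1` leaves `U i`, which forces `z.2` into the `C`-thickening of every `(V j)ᶜ`.
Both alternatives are bounded sets of one factor, and on the asymptotic product
`|d(p,x) - d(q,y)| ≤ R` bounds the other coordinate as well.
-/

open Set Bornology Metric

/-- `c`-coarsely geodesic: any two points are joined by a `c`-path. -/
def CGeodesicWith {Y : Type*} [MetricSpace Y] (c : ℝ) : Prop :=
  ∀ x y : Y, ∃ (n : ℕ) (p : ℕ → Y), p 0 = x ∧ p n = y ∧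
    ∀ i < n, dist (p i) (p (i + 1)) ≤ c

/-- Coarsely geodesic metric space. -/
def CGeodesic (Y : Type*) [MetricSpace Y] : Prop :=
  ∃ c > (0 : ℝ), CGeodesicWith (Y := Y) c

/-- Coarsely proper: for some scale `r`, every bounded set is covered by finitely many
`r`-balls. -/
def CProperSpace (Y : Type*) [MetricSpace Y] : Prop :=
  ∃ r > (0 : ℝ), ∀ B : Set Y, IsBounded B → ∃ s : Finset Y, B ⊆ ⋃ y ∈ s, Metric.ball y r

/-- The asymptotic product `X ∗ Y` of two metric spaces, relative to base points
`p, q` and a constant `R`. -/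
def asymProd {X Y : Type*} [MetricSpace X] [MetricSpace Y] (p : X) (q : Y) (R : ℝ) :
    Set (X × Y) :=
  {z : X × Y | |dist p z.1 - dist q z.2| ≤ R}

/-- A finite family coarsely covers `Z` if for every entourage `E`, the intersection of
the `E`-thickenings of the complements is bounded. -/
def CCover {Z : Type*} [PseudoMetricSpace Z] {ι : Type*} (W : ι → Set Z) : Prop :=
  ∀ E : Set (Z × Z), IsEnt E → IsBounded (⋂ i, entImg E (W i)ᶜ)

lemma isEnt_setOf_dist_le {X : Type*} [PseudoMetricSpace X] (C : ℝ) :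
    IsEnt {a : X × X | dist a.1 a.2 ≤ C} :=
  ⟨C, fun _ h => h⟩

section AsymProd

variable {X Y : Type*} [MetricSpace X] [MetricSpace Y] {p : X} {q : Y} {R : ℝ}

lemma mem_asymProd {z : X × Y} : z ∈ asymProd p q R ↔ |dist p z.1 - dist q z.2| ≤ R :=
  Iff.rfl

lemma dist_snd_le_of_mem_asymProd {z : X × Y} (hz : z ∈ asymProd p q R) :
    dist q z.2 ≤ dist p z.1 + R := by
  linarith [(abs_le.1 (mem_asymProd.1 hz)).1]

lemma dist_fst_le_of_mem_asymProd {z : X × Y} (hz : z ∈ asymProd p q R) :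
    dist p z.1 ≤ dist q z.2 + R := by
  linarith [(abs_le.1 (mem_asymProd.1 hz)).2]

lemma isBounded_asymProd_fst_mem {S : Set X} (hS : IsBounded S) :
    IsBounded {z : asymProd p q R | (z : X × Y).1 ∈ S} := by
  obtain ⟨r, hr⟩ := hS.subset_closedBall p
  rw [← isBounded_image_subtype_val]
  refine (hS.prod (isBounded_closedBall (x := q) (r := r + R))).subset ?_
  rintro _ ⟨z, hzS, rfl⟩
  have hz1 : dist p (z : X × Y).1 ≤ r := by simpa [dist_comm] using hr hzS
  refine ⟨hzS, ?_⟩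
  rw [mem_closedBall, dist_comm]
  linarith [dist_snd_le_of_mem_asymProd z.2]

lemma isBounded_asymProd_snd_mem {S : Set Y} (hS : IsBounded S) :
    IsBounded {z : asymProd p q R | (z : X × Y).2 ∈ S} := by
  obtain ⟨r, hr⟩ := hS.subset_closedBall q
  rw [← isBounded_image_subtype_val]
  refine ((isBounded_closedBall (x := p) (r := r + R)).prod hS).subset ?_
  rintro _ ⟨z, hzS, rfl⟩
  have hz2 : dist q (z : X × Y).2 ≤ r := by simpa [dist_comm] using hr hzS
  refine ⟨?_, hzS⟩
  rw [mem_closedBall, dist_comm]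
  linarith [dist_fst_le_of_mem_asymProd z.2]

end AsymProd

lemma iInter_entImg_compl_prod_subset {X Y : Type*} [PseudoMetricSpace X] [PseudoMetricSpace Y]
    {Z : Set (X × Y)} {ι κ : Type*} (U : ι → Set X) (V : κ → Set Y)
    {E : Set (Z × Z)} {C : ℝ} (hC : ∀ e ∈ E, dist e.1 e.2 ≤ C) :
    ⋂ ij : ι × κ,
        entImg E {z : Z | (z : X × Y).1 ∈ U ij.1 ∧ (z : X × Y).2 ∈ V ij.2}ᶜ ⊆
      {z : Z | (z : X × Y).1 ∈ ⋂ i, entImg {a : X × X | dist a.1 a.2 ≤ C} (U i)ᶜ} ∪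
      {z : Z | (z : X × Y).2 ∈ ⋂ j, entImg {a : Y × Y | dist a.1 a.2 ≤ C} (V j)ᶜ} := by
  intro z hz
  rw [mem_iInter] at hz
  by_cases hfst : ∀ i, (z : X × Y).1 ∈ entImg {a : X × X | dist a.1 a.2 ≤ C} (U i)ᶜ
  · exact Or.inl (mem_iInter.2 hfst)
  obtain ⟨i, hi⟩ := not_forall.1 hfst
  refine Or.inr (mem_iInter.2 fun j => ?_)
  obtain ⟨w, hwUV, hwz⟩ := hz (i, j)
  have hdist : dist (w : X × Y) z ≤ C := hC _ hwz
  rw [Prod.dist_eq, max_le_iff] at hdist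
  have hwU : (w : X × Y).1 ∈ U i := by
    by_contra hwU
    exact hi ⟨_, hwU, hdist.1⟩
  exact ⟨_, fun hwV => hwUV ⟨hwU, hwV⟩, hdist.2⟩

theorem stmt11_general {X Y : Type*} [MetricSpace X] [MetricSpace Y]
    (p : X) (q : Y) (R : ℝ)
    {n m : ℕ} (U : Fin n → Set X) (V : Fin m → Set Y)
    (hU : CCover U) (hV : CCover V) :
    CCover (fun ij : Fin n × Fin m =>
      {z : asymProd p q R | (z : X × Y).1 ∈ U ij.1 ∧ (z : X × Y).2 ∈ V ij.2}) := by
  rintro E ⟨C, hC⟩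
  exact ((isBounded_asymProd_fst_mem (hU _ (isEnt_setOf_dist_le C))).union
    (isBounded_asymProd_snd_mem (hV _ (isEnt_setOf_dist_le C)))).subset
    (iInter_entImg_compl_prod_subset U V hC)

/-- coarse covers of the factors induce a coarse cover of the asymptotic
product. -/
theorem stmt11 {X Y : Type*} [MetricSpace X] [MetricSpace Y]
    (hYg : CGeodesic Y) (hYp : CProperSpace Y)
    (p : X) (q : Y) (R : ℝ) (hR : 0 ≤ R)
    {n m : ℕ} (U : Fin n → Set X) (V : Fin m → Set Y)
    (hU : CCover U) (hV : CCover V) :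
    CCover (fun ij : Fin n × Fin m =>
      {z : asymProd p q R | (z : X × Y).1 ∈ U ij.1 ∧ (z : X × Y).2 ∈ V ij.2}) :=
  stmt11_general p q R U V hU hV
end

section
/- Let X, Y be metric spaces and let 𝔉, 𝔊 be coarse ultrafilters on X and Y respectively, and let 𝔉 × 𝔊 := {A × B : A ∈ 𝔉, B ∈ 𝔊}, where X × Y carries the sup metric. Then: (1) any two members of 𝔉×𝔊 are not coarsely disjoint in X×Y; (2) if A×B ∈ 𝔉×𝔊 with A = A₁ ∪ A₂ and B = B₁ ∪ B₂, then A_i × B_j ∈ 𝔉×𝔊 for some i, j; (3) X×Y ∈ 𝔉×𝔊. -/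
open Set Bornology Metric

/-- Product system of two systems of subsets. -/
def prodS {X Y : Type*} (S : Set (Set X)) (T : Set (Set Y)) : Set (Set (X × Y)) :=
  {C : Set (X × Y) | ∃ A ∈ S, ∃ B ∈ T, C = A ×ˢ B}

lemma mem_nonempty {X : Type*} [PseudoMetricSpace X] (F : CUF X) {A : Set X}
    (hA : A ∈ F.sets) : A.Nonempty := by
  by_contra h
  rw [Set.not_nonempty_iff_eq_empty] at h
  obtain ⟨E, _, hb⟩ := F.pairClose A hA A hA
  apply hb
  have : entImg E A = ∅ := by
    subst h; ext y; simp [entImg]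
  simp [this]

lemma unbounded_prod {X Y : Type*} [PseudoMetricSpace X] [PseudoMetricSpace Y]
    {S : Set X} {T : Set Y} (hS : ¬ IsBounded S) (hT : ¬ IsBounded T) :
    ¬ IsBounded (S ×ˢ T) := by
  intro h
  obtain ⟨t, ht⟩ : T.Nonempty := by
    by_contra h'
    rw [Set.not_nonempty_iff_eq_empty] at h'
    exact hT (h' ▸ isBounded_empty)
  apply hS
  rw [isBounded_iff] at h ⊢
  obtain ⟨C, hC⟩ := h
  refine ⟨C, fun x hx y hy => ?_⟩
  have := hC (Set.mk_mem_prod hx ht) (Set.mk_mem_prod hy ht)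
  rw [Prod.dist_eq] at this
  exact le_trans (le_max_left _ _) this

/-- `𝔉 × 𝔊 = {A × B : A ∈ 𝔉, B ∈ 𝔊}` is a coarse ultrafilter on `X × Y`
(with the splitting axiom in its product form). -/
theorem stmt12 {X Y : Type*} [MetricSpace X] [MetricSpace Y] (F : CUF X) (G : CUF Y) :
    (∀ C ∈ prodS F.sets G.sets, ∀ D ∈ prodS F.sets G.sets, NotCD C D) ∧
    (∀ (A₁ A₂ : Set X) (B₁ B₂ : Set Y),
      (A₁ ∪ A₂) ×ˢ (B₁ ∪ B₂) ∈ prodS F.sets G.sets →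
      A₁ ×ˢ B₁ ∈ prodS F.sets G.sets ∨ A₁ ×ˢ B₂ ∈ prodS F.sets G.sets ∨
      A₂ ×ˢ B₁ ∈ prodS F.sets G.sets ∨ A₂ ×ˢ B₂ ∈ prodS F.sets G.sets) ∧
    Set.univ ∈ prodS F.sets G.sets := by
  refine ⟨?_, ?_, ?_⟩
  · rintro C ⟨A, hA, B, hB, rfl⟩ D ⟨A', hA', B', hB', rfl⟩
    obtain ⟨E, ⟨CE, hCE⟩, hEb⟩ := F.pairClose A hA A' hA'
    obtain ⟨E', ⟨CE', hCE'⟩, hE'b⟩ := G.pairClose B hB B' hB'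
    refine ⟨{p : (X × Y) × (X × Y) | (p.1.1, p.2.1) ∈ E ∧ (p.1.2, p.2.2) ∈ E'},
      ⟨max CE CE', ?_⟩, ?_⟩
    · rintro ⟨⟨x, y⟩, ⟨x', y'⟩⟩ ⟨h1, h2⟩
      rw [Prod.dist_eq]
      exact max_le_max (hCE _ h1) (hCE' _ h2)
    · have key : ∀ (U : Set X) (V : Set Y),
          entImg {p : (X × Y) × (X × Y) | (p.1.1, p.2.1) ∈ E ∧ (p.1.2, p.2.2) ∈ E'}
            (U ×ˢ V) = entImg E U ×ˢ entImg E' V := by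
        intro U V
        ext ⟨x, y⟩
        constructor
        · rintro ⟨⟨a, b⟩, ⟨ha, hb⟩, h1, h2⟩
          exact ⟨⟨a, ha, h1⟩, ⟨b, hb, h2⟩⟩
        · rintro ⟨⟨a, ha, h1⟩, ⟨b, hb, h2⟩⟩
          exact ⟨⟨a, b⟩, ⟨ha, hb⟩, h1, h2⟩
      rw [key, key, Set.prod_inter_prod]
      exact unbounded_prod hEb hE'b
  · rintro A₁ A₂ B₁ B₂ ⟨A, hA, B, hB, hprod⟩
    have hAB : (A ×ˢ B).Nonempty :=
      (mem_nonempty F hA).prod (mem_nonempty G hB)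
    rw [← hprod] at hAB
    obtain ⟨hA', hB'⟩ := (Set.prod_eq_prod_iff_of_nonempty hAB).mp hprod
    rcases F.split A₁ A₂ (hA'.symm ▸ hA) with h1 | h1 <;>
      rcases G.split B₁ B₂ (hB'.symm ▸ hB) with h2 | h2
    · exact Or.inl ⟨A₁, h1, B₁, h2, rfl⟩
    · exact Or.inr (Or.inl ⟨A₁, h1, B₂, h2, rfl⟩)
    · exact Or.inr (Or.inr (Or.inl ⟨A₂, h1, B₁, h2, rfl⟩))
    · exact Or.inr (Or.inr (Or.inr ⟨A₂, h1, B₂, h2, rfl⟩))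
  · exact ⟨Set.univ, F.univ_mem, Set.univ, G.univ_mem, (Set.univ_prod_univ).symm⟩
end
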